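/- The function $f(a,b) := 4 + \frac{1}{2}\big(ab - 2a - 2b - \sqrt{ab(4-a)(4-b)}\big)$ is convex on the convex set $\{(a,b) \in \mathbb{R}_{\geq 0}^2 \mid a + b \leq 4\}$. -/

import Mathlib

/-!
Every `c ≠ 0` gives a convex quadratic minorant of `f` on the square `[0,4]²`, namely
`(c (a - 2) + c⁻¹ (b - 2))² / 4 + 2 - c² - c⁻²`. With `A = a (4 - a)` and `B = b (4 - b)`, the gap
between `f` and this minorant is the AM-GM defect `(c √A - c⁻¹ √B)² / 4`, whose infimum over `c`
is `0`. So `f` is the pointwise supremum of convex functions on the square, hence convex there,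
and in particular on the triangle `a + b ≤ 4`.
-/

noncomputable def f (a b : ℝ) : ℝ :=
  4 + 1 / 2 * (a * b - 2 * a - 2 * b - Real.sqrt (a * b * (4 - a) * (4 - b)))

open Real Set

theorem convexOn_of_forall_isLUB {𝕜 E β ι : Type*} [Semiring 𝕜] [PartialOrder 𝕜]
    [AddCommMonoid E] [SMul 𝕜 E] [AddCommMonoid β] [PartialOrder β] [IsOrderedAddMonoid β]
    [Module 𝕜 β] [PosSMulMono 𝕜 β] {s : Set E} {f : E → β} {g : ι → E → β}
    (hs : Convex 𝕜 s) (hg : ∀ i, ConvexOn 𝕜 s (g i))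
    (hf : ∀ x ∈ s, IsLUB (range fun i => g i x) (f x)) : ConvexOn 𝕜 s f := by
  refine ⟨hs, fun x hx y hy a b ha hb hab => (hf _ (hs hx hy ha hb hab)).2 ?_⟩
  rintro _ ⟨i, rfl⟩
  calc g i (a • x + b • y) ≤ a • g i x + b • g i y := (hg i).2 hx hy ha hb hab
    _ ≤ a • f x + b • f y := by
      gcongr
      · exact (hf x hx).1 (mem_range_self i)
      · exact (hf y hy).1 (mem_range_self i)

lemma exists_mul_sub_inv_mul_sq_le {s t ε : ℝ} (hs : 0 ≤ s) (ht : 0 ≤ t) (hε : 0 < ε) :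
    ∃ c : ℝ, c ≠ 0 ∧ (c * s - c⁻¹ * t) ^ 2 ≤ ε := by
  have hε' : √ε ^ 2 = ε := sq_sqrt hε.le
  rcases hs.eq_or_lt with rfl | hs
  · refine ⟨(t + 1) / √ε, by positivity, ?_⟩
    have : t / (t + 1) ≤ 1 := (div_le_one (by positivity)).2 (by linarith)
    calc ((t + 1) / √ε * 0 - ((t + 1) / √ε)⁻¹ * t) ^ 2 = √ε ^ 2 * (t / (t + 1)) ^ 2 := by
          field_simp; ring
      _ ≤ ε := by rw [hε']; exact mul_le_of_le_one_right hε.le (pow_le_one₀ (by positivity) this)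
  rcases ht.eq_or_lt with rfl | ht
  · refine ⟨√ε / (s + 1), by positivity, ?_⟩
    have : s / (s + 1) ≤ 1 := (div_le_one (by positivity)).2 (by linarith)
    calc (√ε / (s + 1) * s - (√ε / (s + 1))⁻¹ * 0) ^ 2 = √ε ^ 2 * (s / (s + 1)) ^ 2 := by ring
      _ ≤ ε := by rw [hε']; exact mul_le_of_le_one_right hε.le (pow_le_one₀ (by positivity) this)
  · refine ⟨√(t / s), by positivity, ?_⟩
    have hc : √(t / s) ^ 2 = t / s := sq_sqrt (by positivity)
    have : √(t / s) * s - (√(t / s))⁻¹ * t = (√(t / s))⁻¹ * (√(t / s) ^ 2 * s - t) := by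
      field_simp
    rw [this, hc, div_mul_cancel₀ t hs.ne', sub_self, mul_zero, sq, zero_mul]
    exact hε.le

noncomputable def minorant (c a b : ℝ) : ℝ :=
  (c * (a - 2) + c⁻¹ * (b - 2)) ^ 2 / 4 + 2 - c ^ 2 - c⁻¹ ^ 2

lemma convexOn_minorant (c : ℝ) : ConvexOn ℝ univ (fun p : ℝ × ℝ => minorant c p.1 p.2) := by
  let L : ℝ × ℝ →ᵃ[ℝ] ℝ :=
    ((c / 2) • LinearMap.fst ℝ ℝ ℝ + (c⁻¹ / 2) • LinearMap.snd ℝ ℝ ℝ).toAffineMap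
      - AffineMap.const ℝ (ℝ × ℝ) (c + c⁻¹)
  have h := ((even_two.convexOn_pow (𝕜 := ℝ)).comp_affineMap L).add_const (2 - c ^ 2 - c⁻¹ ^ 2)
  refine (h.subset (subset_univ _) convex_univ).congr fun p _ => ?_
  simp only [L, minorant, AffineMap.coe_sub, LinearMap.coe_toAffineMap, AffineMap.coe_const,
    Pi.add_apply, Pi.sub_apply, Function.comp_apply, Function.const_apply, LinearMap.add_apply,
    LinearMap.smul_apply, LinearMap.fst_apply, LinearMap.snd_apply, smul_eq_mul]
  ring

lemma f_sub_minorant {a b c : ℝ} (hc : c ≠ 0) (ha : a ∈ Icc (0 : ℝ) 4) (hb : b ∈ Icc (0 : ℝ) 4) :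
    f a b - minorant c a b = (c * √(a * (4 - a)) - c⁻¹ * √(b * (4 - b))) ^ 2 / 4 := by
  have hA : √(a * (4 - a)) ^ 2 = a * (4 - a) := sq_sqrt (by nlinarith [ha.1, ha.2])
  have hB : √(b * (4 - b)) ^ 2 = b * (4 - b) := sq_sqrt (by nlinarith [hb.1, hb.2])
  have hAB : √(a * b * (4 - a) * (4 - b)) = √(a * (4 - a)) * √(b * (4 - b)) := by
    rw [← sqrt_mul (by nlinarith [ha.1, ha.2])]; ring_nf
  rw [f, minorant, hAB]
  linear_combination (√(a * (4 - a)) * √(b * (4 - b)) / 2 - (a - 2) * (b - 2) / 2) *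
    mul_inv_cancel₀ hc - (c ^ 2 / 4) * hA - (c⁻¹ ^ 2 / 4) * hB

lemma isLUB_minorant {a b : ℝ} (ha : a ∈ Icc (0 : ℝ) 4) (hb : b ∈ Icc (0 : ℝ) 4) :
    IsLUB (range fun c : ℝˣ => minorant c a b) (f a b) := by
  refine ⟨?_, fun M hM => le_of_forall_pos_le_add fun ε hε => ?_⟩
  · rintro _ ⟨c, rfl⟩
    have hgap : 0 ≤ f a b - minorant c a b := f_sub_minorant c.ne_zero ha hb ▸ by positivity
    exact sub_nonneg.1 hgap
  · obtain ⟨c, hc, hgap⟩ :=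
      exists_mul_sub_inv_mul_sq_le (sqrt_nonneg (a * (4 - a))) (sqrt_nonneg (b * (4 - b)))
        (by positivity : (0 : ℝ) < 4 * ε)
    have hcM : minorant c a b ≤ M := hM ⟨Units.mk0 c hc, rfl⟩
    linarith [f_sub_minorant hc ha hb]

theorem convexOn_f_Icc_prod_Icc :
    ConvexOn ℝ (Icc 0 4 ×ˢ Icc 0 4) (fun p : ℝ × ℝ => f p.1 p.2) :=
  have hS : Convex ℝ (Icc (0 : ℝ) 4 ×ˢ Icc (0 : ℝ) 4) := (convex_Icc 0 4).prod (convex_Icc 0 4)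
  convexOn_of_forall_isLUB hS (fun c : ℝˣ => (convexOn_minorant c).subset (subset_univ _) hS)
    fun _ hp => isLUB_minorant hp.1 hp.2

theorem stmt_10 :
    ConvexOn ℝ {p : ℝ × ℝ | 0 ≤ p.1 ∧ 0 ≤ p.2 ∧ p.1 + p.2 ≤ 4}
      (fun p => f p.1 p.2) := by
  have hconvex : Convex ℝ {p : ℝ × ℝ | 0 ≤ p.1 ∧ 0 ≤ p.2 ∧ p.1 + p.2 ≤ 4} :=
    (convex_halfSpace_ge (LinearMap.fst ℝ ℝ ℝ).isLinear 0).inter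
      ((convex_halfSpace_ge (LinearMap.snd ℝ ℝ ℝ).isLinear 0).inter
        (convex_halfSpace_le IsLinearMap.isLinearMap_add 4))
  refine convexOn_f_Icc_prod_Icc.subset ?_ hconvex
  rintro p ⟨h₁, h₂, hsum⟩
  exact ⟨⟨h₁, by linarith⟩, h₂, by linarith⟩
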